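/- arXiv:1710.03353 — 7 statements merged into one kernel-verified Lean document; each statement's English description precedes it below -/
import Mathlib

section
/- Let F/E be an algebraic field extension of fields of characteristic p > 0. If there is a natural number N bounding the degree [E(a):E] for every element a of F, then the compositum E·F^(p^∞) is a finite separable extension of E, where F^(p^∞) = ⋂_{n} F^(p^n) is the largest perfect subfield of F. -/
open IntermediateField Polynomial

private lemma aux_insep_step {p : ℕ} {E F : Type*} [Field E] [Field F] [Algebra E F]
    (hp : p.Prime) [CharP F p]
    (a b : F) (hab : b ^ p = a) (ha : ¬ IsSeparable E a) (hb : IsIntegral E b) :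
    ¬ IsSeparable E b ∧ (minpoly E a).natDegree < (minpoly E b).natDegree := by
  haveI : CharP E p := (algebraMap E F).charP (algebraMap E F).injective p
  have ha_int : IsIntegral E a := hab ▸ hb.pow p
  have hmem : a ∈ E⟮b⟯ := hab ▸ pow_mem (mem_adjoin_simple_self E b) p
  have hbsep : ¬ IsSeparable E b := by
    intro hsb
    have hsep : Algebra.IsSeparable E E⟮b⟯ :=
      (isSeparable_adjoin_iff_isSeparable E F).2 (by rintro x hx; rw [Set.mem_singleton_iff] at hx; subst hx; exact hsb)
    have h1 : IsSeparable E (⟨a, hmem⟩ : E⟮b⟯) := Algebra.IsSeparable.isSeparable E _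
    apply ha
    have h2 : minpoly E (algebraMap E⟮b⟯ F ⟨a, hmem⟩) = minpoly E (⟨a, hmem⟩ : E⟮b⟯) :=
      minpoly.algebraMap_eq (algebraMap E⟮b⟯ F).injective _
    unfold IsSeparable at h1 ⊢
    rwa [show a = algebraMap E⟮b⟯ F ⟨a, hmem⟩ from rfl, h2]
  refine ⟨hbsep, ?_⟩
  rcases Polynomial.separable_or p (minpoly.irreducible hb) with hs | ⟨-, g, hgirr, hgexp⟩
  · exact absurd hs hbsep
  have hg0 : aeval a g = 0 := by
    have := minpoly.aeval E b
    rw [← hgexp, Polynomial.expand_aeval, hab] at this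
    exact this
  have hdvd : minpoly E a ∣ g := minpoly.dvd E a hg0
  have hle : (minpoly E a).natDegree ≤ g.natDegree :=
    Polynomial.natDegree_le_of_dvd hdvd hgirr.ne_zero
  have hpos : 0 < (minpoly E a).natDegree := minpoly.natDegree_pos ha_int
  have hdb : (minpoly E b).natDegree = g.natDegree * p := by
    rw [← hgexp, Polynomial.natDegree_expand]
  have : g.natDegree < g.natDegree * p :=
    (Nat.lt_mul_iff_one_lt_right (by omega)).2 hp.one_lt
  omega

private lemma aux_sep {p : ℕ} {E F : Type*} [Field E] [Field F] [Algebra E F]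
    (hp : p.Prime) [CharP F p] (N : ℕ)
    (halg : Algebra.IsIntegral E F)
    (hdeg : ∀ a : F, (minpoly E a).natDegree ≤ N)
    {a : F} (ha : a ∈ ⋂ n : ℕ, Set.range fun x : F => x ^ p ^ n) :
    IsSeparable E a := by
  haveI : Fact p.Prime := ⟨hp⟩
  haveI : ExpChar F p := ExpChar.prime hp
  by_contra hsep
  have hroot : ∀ x ∈ (⋂ n : ℕ, Set.range fun x : F => x ^ p ^ n),
      ∃ b ∈ (⋂ n : ℕ, Set.range fun x : F => x ^ p ^ n), b ^ p = x := by
    intro x hx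
    simp only [Set.mem_iInter, Set.mem_range] at hx
    obtain ⟨c, hc⟩ := hx 1
    rw [pow_one] at hc
    refine ⟨c, ?_, hc⟩
    simp only [Set.mem_iInter, Set.mem_range]
    intro n
    obtain ⟨d, hd⟩ := hx (n + 1)
    refine ⟨d, ?_⟩
    have hfr : (d ^ p ^ n) ^ p = c ^ p := by
      rw [← pow_mul, ← pow_succ, hd, hc]
    exact frobenius_inj F p hfr
  have key : ∀ k : ℕ, ∃ x ∈ (⋂ n : ℕ, Set.range fun x : F => x ^ p ^ n),
      ¬ IsSeparable E x ∧ k ≤ (minpoly E x).natDegree := by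
    intro k
    induction k with
    | zero => exact ⟨a, ha, hsep, Nat.zero_le _⟩
    | succ k ih =>
      obtain ⟨x, hxS, hxsep, hk⟩ := ih
      obtain ⟨b, hbS, hb⟩ := hroot x hxS
      obtain ⟨h1, h2⟩ := aux_insep_step hp x b hb hxsep (halg.isIntegral b)
      exact ⟨b, hbS, h1, by omega⟩
  obtain ⟨x, -, -, hx⟩ := key (N + 1)
  exact absurd (hdeg x) (by omega)

/-- If `E` is a big subfield of `F` (char `p > 0`), i.e. `F/E` is algebraic
with a uniform bound `N` on the degrees of elements, then the compositum `E·F^(p^∞)`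
is finite and separable over `E`, where `F^(p^∞) = ⋂ n, F^(p^n)`. -/
theorem compositum_perfect_subfield_finite_separable
    (p : ℕ) (hp : p.Prime) (E F : Type*) [Field E] [Field F] [CharP F p]
    [Algebra E F] (N : ℕ)
    (halg : Algebra.IsIntegral E F)
    (hdeg : ∀ a : F, (minpoly E a).natDegree ≤ N) :
    FiniteDimensional E
        (IntermediateField.adjoin E (⋂ n : ℕ, Set.range fun x : F => x ^ p ^ n)) ∧
      Algebra.IsSeparable E
        (IntermediateField.adjoin E (⋂ n : ℕ, Set.range fun x : F => x ^ p ^ n)) := by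
  set S : Set F := ⋂ n : ℕ, Set.range fun x : F => x ^ p ^ n with hSdef
  set K : IntermediateField E F := IntermediateField.adjoin E S with hKdef
  have hsepK : Algebra.IsSeparable E K :=
    (isSeparable_adjoin_iff_isSeparable E F).2 fun x hx => aux_sep hp N halg hdeg hx
  refine ⟨?_, hsepK⟩
  have hmem_sep : ∀ x ∈ K, IsSeparable E x := by
    intro x hx
    have h1 : IsSeparable E (⟨x, hx⟩ : K) := Algebra.IsSeparable.isSeparable E _
    have h2 : minpoly E (algebraMap K F ⟨x, hx⟩) = minpoly E (⟨x, hx⟩ : K) :=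
      minpoly.algebraMap_eq (algebraMap K F).injective _
    unfold IsSeparable at h1 ⊢
    rwa [show x = algebraMap K F ⟨x, hx⟩ from rfl, h2]
  -- pick an element of maximal degree
  let T : Set ℕ := {n | ∃ x ∈ K, (minpoly E x).natDegree = n}
  have hTne : T.Nonempty := ⟨_, 1, one_mem K, rfl⟩
  have hTbdd : BddAbove T := ⟨N, by rintro n ⟨x, -, rfl⟩; exact hdeg x⟩
  obtain ⟨aK, haK, ham⟩ : ∃ x ∈ K, (minpoly E x).natDegree = sSup T := Nat.sSup_mem hTne hTbdd
  have hmax : ∀ x ∈ K, (minpoly E x).natDegree ≤ (minpoly E aK).natDegree := by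
    intro x hx
    rw [ham]
    exact le_csSup hTbdd ⟨x, hx, rfl⟩
  have haint : IsIntegral E aK := halg.isIntegral aK
  haveI : FiniteDimensional E E⟮aK⟯ := adjoin.finiteDimensional haint
  have hKa : K = E⟮aK⟯ := by
    refine le_antisymm ?_ (adjoin_simple_le_iff.2 haK)
    intro b hb
    set L : IntermediateField E F := IntermediateField.adjoin E {aK, b} with hLdef
    have hLK : L ≤ K := adjoin_le_iff.2 (by
      rintro x (rfl | rfl)
      · exact haK
      · exact hb)
    haveI : FiniteDimensional E L :=
      finiteDimensional_adjoin fun x _ => halg.isIntegral x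
    haveI : Algebra.IsSeparable E L :=
      (isSeparable_adjoin_iff_isSeparable E F).2 (by
        rintro x (rfl | rfl)
        · exact hmem_sep _ haK
        · exact hmem_sep _ hb)
    obtain ⟨c, hc⟩ := Field.exists_primitive_element E L
    have hLc : E⟮(c : F)⟯ = L := by
      have := congrArg IntermediateField.lift hc
      rwa [lift_adjoin_simple, lift_top] at this
    have hcK : (c : F) ∈ K := hLK c.2
    have h1 : Module.finrank E L = (minpoly E (c : F)).natDegree := by
      rw [← (IntermediateField.equivOfEq hLc).toLinearEquiv.finrank_eq,
        adjoin.finrank (halg.isIntegral (c : F))]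
    have h3 : E⟮aK⟯ ≤ L := adjoin_simple_le_iff.2 (subset_adjoin E _ (by left; rfl))
    have heq : E⟮aK⟯ = L := by
      apply IntermediateField.eq_of_le_of_finrank_le h3
      rw [h1, adjoin.finrank haint]
      exact hmax _ hcK
    rw [heq]
    exact subset_adjoin E _ (by right; rfl)
  exact Module.Finite.equiv (IntermediateField.equivOfEq hKa.symm).toLinearEquiv
end

section
/- Let F/E be an algebraic field extension of characteristic p > 0 fields such that the degrees [E(a):E] for a ∈ F are bounded by some N < ∞. If a ∈ F^(p^∞), then a is separably algebraic over E. -/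
/-!
Let `K` be the separable closure of `E` in `F`, so that `F / K` is purely inseparable. Every
`b ∈ F` has minimal polynomial `X ^ p ^ e - c` over `K`, of degree `p ^ e ≤ [E(b) : E] ≤ N`;
hence `e ≤ N` and `b ^ p ^ N ∈ K`. An element of `F^(p^∞)` is such a `p ^ N`-th power.
-/

open Polynomial

theorem minpoly.natDegree_le_of_isScalarTower (A : Type*) {K B : Type*} [Field A] [Field K]
    [Ring B] [Algebra A K] [Algebra A B] [Algebra K B] [IsScalarTower A K B] {x : B}
    (hx : IsIntegral A x) : (minpoly K x).natDegree ≤ (minpoly A x).natDegree :=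
  (natDegree_le_of_dvd (minpoly.dvd_map_of_isScalarTower A K x)
    ((Polynomial.map_ne_zero_iff (algebraMap A K).injective).2 (minpoly.ne_zero hx))).trans_eq
    (natDegree_map _)

namespace IsPurelyInseparable

theorem pow_mem_range_of_natDegree_minpoly_le {K L : Type*} [Field K] [Field L] [Algebra K L]
    [IsPurelyInseparable K L] {p : ℕ} (hp : p.Prime) [ExpChar K p] {a : L} {n : ℕ}
    (ha : (minpoly K a).natDegree ≤ n) : a ^ p ^ n ∈ (algebraMap K L).range := by
  have he : elemExponent K a ≤ n := calc
    elemExponent K a ≤ p ^ elemExponent K a := (Nat.lt_pow_self hp.one_lt).le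
    _ = (minpoly K a).natDegree := (minpoly_natDegree_eq' K p a).symm
    _ ≤ n := ha
  refine ⟨elemReduct K a ^ p ^ (n - elemExponent K a), ?_⟩
  rw [map_pow, algebraMap_elemReduct_eq' K p, ← pow_mul, ← pow_add, Nat.add_sub_cancel' he]

end IsPurelyInseparable

theorem isSeparable_pow_of_natDegree_minpoly_le {E F : Type*} [Field E] [Field F] [Algebra E F]
    [Algebra.IsIntegral E F] {p : ℕ} (hp : p.Prime) [ExpChar F p] {N : ℕ}
    (hdeg : ∀ x : F, (minpoly E x).natDegree ≤ N) (b : F) : IsSeparable E (b ^ p ^ N) := by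
  have : ExpChar (separableClosure E F) p :=
    (algebraMap (separableClosure E F) F).expChar (FaithfulSMul.algebraMap_injective _ F) p
  obtain ⟨y, hy⟩ := IsPurelyInseparable.pow_mem_range_of_natDegree_minpoly_le
    (K := separableClosure E F) hp
    ((minpoly.natDegree_le_of_isScalarTower E (Algebra.IsIntegral.isIntegral b)).trans (hdeg b))
  exact mem_separableClosure_iff.1 (hy ▸ y.2)

/-- If `E` is a big subfield of `F` (char `p > 0`), then every element of
the largest perfect subfield `F^(p^∞) = ⋂ n, F^(p^n)` is separably algebraic over `E`. -/
theorem isSeparable_of_mem_perfect_subfield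
    (p : ℕ) (hp : p.Prime) (E F : Type*) [Field E] [Field F] [CharP F p]
    [Algebra E F] (N : ℕ)
    (halg : Algebra.IsIntegral E F)
    (hdeg : ∀ x : F, (minpoly E x).natDegree ≤ N)
    (a : F) (ha : a ∈ ⋂ n : ℕ, Set.range fun x : F => x ^ p ^ n) :
    IsSeparable E a := by
  have : ExpChar F p := ExpChar.prime hp
  obtain ⟨b, rfl⟩ := Set.mem_iInter.1 ha N
  exact isSeparable_pow_of_natDegree_minpoly_le hp hdeg b
end

section
/- Let E ⊆ F be fields of characteristic p > 0 such that F/E is algebraic with a uniform finite bound on degrees [E(a):E]. Then E^(p^∞) is a big subfield of F^(p^∞): there is a uniform finite bound on the degrees [E^(p^∞)(a) : E^(p^∞)] for a ∈ F^(p^∞). -/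
open Polynomial

/-- Lift a polynomial over `F` whose coefficients all lie in a subfield `L` to a
polynomial over `L`. -/
private lemma subfield_poly_lift {F : Type*} [Field F] (L : Subfield F) (f : F[X])
    (h : ∀ i, f.coeff i ∈ L) : ∃ g : Polynomial L, g.map (algebraMap L F) = f := by
  refine ⟨∑ i ∈ Finset.range (f.natDegree + 1), C (⟨f.coeff i, h i⟩ : L) * X ^ i, ?_⟩
  rw [Polynomial.map_sum]
  simp only [Polynomial.map_mul, Polynomial.map_C, Polynomial.map_pow, Polynomial.map_X]
  exact (f.as_sum_range_C_mul_X_pow).symm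

/-- If `E` is a big subfield of `F` (char `p > 0`), then `E^(p^∞)` is a big
subfield of `F^(p^∞)`: the degrees of elements of `F^(p^∞)` over `E^(p^∞)` are uniformly
bounded (and all such elements are algebraic over `E^(p^∞)`). -/
theorem perfect_closure_big_subfield
    (p : ℕ) (hp : p.Prime) (F : Type*) [Field F] [ExpChar F p]
    (E : Subfield F) (N : ℕ)
    (halg : ∀ a : F, IsIntegral E a)
    (hdeg : ∀ a : F, (minpoly E a).natDegree ≤ N)
    (Fpinf Epinf : Subfield F)
    (hFp : Fpinf = ⨅ n : ℕ, (iterateFrobenius F p n).fieldRange)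
    (hEp : Epinf = ⨅ n : ℕ, Subfield.map (iterateFrobenius F p n) E) :
    ∃ M : ℕ, ∀ a : F, a ∈ Fpinf →
      IsIntegral Epinf a ∧ (minpoly Epinf a).natDegree ≤ M := by
  refine ⟨N, fun a ha => ?_⟩
  set K : ℕ → Subfield F := fun n => Subfield.map (iterateFrobenius F p n) E with hK
  -- the chain `K n` is decreasing
  have hKanti : Antitone K := by
    refine antitone_nat_of_succ_le fun n x hx => ?_
    rcases Subfield.mem_map.mp hx with ⟨e, he, rfl⟩
    refine Subfield.mem_map.mpr ⟨e ^ p, E.pow_mem he p, ?_⟩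
    simp only [iterateFrobenius_def]
    rw [← pow_mul, ← pow_succ']
  -- for each n, `a` is killed by a monic polynomial over `K n` of degree ≤ N
  have hann : ∀ n : ℕ, ∃ q : Polynomial (K n), q.Monic ∧ aeval a q = 0 ∧ q.natDegree ≤ N := by
    intro n
    have ha' : a ∈ (iterateFrobenius F p n).fieldRange := by
      rw [hFp] at ha; exact Subfield.mem_iInf.mp ha n
    obtain ⟨b, hb⟩ := RingHom.mem_fieldRange.mp ha'
    have hmem : ∀ x : E, ((iterateFrobenius F p n).comp (algebraMap E F)) x ∈ K n :=
      fun x => Subfield.mem_map.mpr ⟨(x : F), x.2, rfl⟩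
    let e : E →+* K n := RingHom.codRestrict _ _ hmem
    refine ⟨(minpoly E b).map e, (minpoly.monic (halg b)).map e, ?_, ?_⟩
    · have hcomp : (algebraMap (K n) F).comp e
          = (iterateFrobenius F p n).comp (algebraMap E F) := rfl
      rw [aeval_def, eval₂_map, hcomp, ← hb,
        ← Polynomial.hom_eval₂ (minpoly E b) (algebraMap E F) (iterateFrobenius F p n) b,
        ← aeval_def, minpoly.aeval, map_zero]
    · rw [(minpoly.monic (halg b)).natDegree_map e]
      exact hdeg b
  have hint : ∀ n, IsIntegral (K n) a := by
    intro n
    obtain ⟨q, hm, h0, -⟩ := hann n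
    exact ⟨q, hm, by rwa [aeval_def] at h0⟩
  set d : ℕ → ℕ := fun n => (minpoly (K n) a).natDegree with hd
  have hdN : ∀ n, d n ≤ N := by
    intro n
    obtain ⟨q, hm, h0, hq⟩ := hann n
    exact le_trans (natDegree_le_natDegree (minpoly.min _ a hm h0)) hq
  set f : ℕ → F[X] := fun n => (minpoly (K n) a).map (algebraMap (K n) F) with hf
  have hfmonic : ∀ n, (f n).Monic := fun n => (minpoly.monic (hint n)).map _
  have hfdeg : ∀ n, (f n).natDegree = d n := fun n =>
    (minpoly.monic (hint n)).natDegree_map _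
  have hfcoeff : ∀ n i, (f n).coeff i ∈ K n := by
    intro n i
    rw [hf, coeff_map]
    exact ((minpoly (K n) a).coeff i).2
  have hdvd : ∀ {n m : ℕ}, n ≤ m → f n ∣ f m := by
    intro n m hnm
    have hle : K m ≤ K n := hKanti hnm
    have hcomp : (algebraMap (K n) F).comp (Subfield.inclusion hle)
        = algebraMap (K m) F := rfl
    have h1 : minpoly (K n) a ∣ (minpoly (K m) a).map (Subfield.inclusion hle) := by
      apply minpoly.dvd
      rw [aeval_def, eval₂_map, hcomp, ← aeval_def, minpoly.aeval]
    have h2 := Polynomial.map_dvd (algebraMap (K n) F) h1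
    rwa [map_map, hcomp] at h2
  have hdmono : Monotone d := by
    intro n m hnm
    rw [← hfdeg n, ← hfdeg m]
    exact natDegree_le_of_dvd (hdvd hnm) (hfmonic m).ne_zero
  -- the degree stabilizes: pick the index where the supremum is attained
  obtain ⟨n0, hn0⟩ : ∃ n0, sSup (Set.range d) = d n0 := by
    have := Nat.sSup_mem (Set.range_nonempty d) ⟨N, by rintro x ⟨n, rfl⟩; exact hdN n⟩
    rcases this with ⟨n0, hn0⟩
    exact ⟨n0, hn0.symm⟩
  have hdle : ∀ m, d m ≤ d n0 := fun m =>
    hn0 ▸ le_csSup ⟨N, by rintro x ⟨n, rfl⟩; exact hdN n⟩ ⟨m, rfl⟩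
  have hstab : ∀ m, n0 ≤ m → f n0 = f m := by
    intro m hm
    refine eq_of_dvd_of_natDegree_le_of_leadingCoeff (hdvd hm) ?_ ?_
    · rw [hfdeg n0, hfdeg m]; exact hdle m
    · rw [(hfmonic n0).leadingCoeff, (hfmonic m).leadingCoeff]
  -- all coefficients of `f n0` lie in `Epinf`
  have hcoe : ∀ i, (f n0).coeff i ∈ Epinf := by
    intro i
    rw [hEp]
    refine Subfield.mem_iInf.mpr fun n => ?_
    rcases le_total n n0 with h | h
    · exact hKanti h (hfcoeff n0 i)
    · rw [hstab n h]; exact hfcoeff n i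
  obtain ⟨g, hg⟩ := subfield_poly_lift Epinf (f n0) hcoe
  have hginj : Function.Injective (algebraMap Epinf F) := (algebraMap Epinf F).injective
  have hgmonic : g.Monic := monic_of_injective hginj (hg ▸ hfmonic n0)
  have hg0 : aeval a g = 0 := by
    rw [aeval_def, ← eval_map, hg, hf]
    rw [eval_map, ← aeval_def, minpoly.aeval]
  refine ⟨⟨g, hgmonic, by rwa [aeval_def] at hg0⟩, ?_⟩
  have h1 : (minpoly Epinf a).natDegree ≤ g.natDegree :=
    natDegree_le_natDegree (minpoly.min _ a hgmonic hg0)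
  have h2 : g.natDegree = d n0 := by
    rw [← hfdeg n0, ← hg, hgmonic.natDegree_map]
  exact h1.trans (h2 ▸ hdN n0)
end

section
/- Let (K,v) be a valued field of characteristic p > 0 with value group Γ_v, and suppose v(a−b) > α if and only if v(a^p − b^p) > pα for all a,b ∈ K and α ∈ Γ_v. Then for any n < ω, any a ∈ K^(p^n), and any α ∈ Γ_v, every element of K^(p^n) can be written as (x−a)/(y−a) with x,y ∈ B(α;a) ∩ K^(p^n) and y ≠ a. -/
/-! `K^(p^n)` is the image of the ring endomorphism `x ↦ x ^ p ^ n`, hence a subfield of `K`,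
and it contains nonzero elements `s` of arbitrarily large valuation (`p ^ n`-th powers of elements of
large valuation). For such `s`, the elements `x = a + z s` and `y = a + s` of `K^(p^n)` lie in
`B(α;a)` and satisfy `(x - a) / (y - a) = z`. -/

section ValuedField

variable {K Γ : Type*} [Field K] [AddCommGroup Γ] [LinearOrder Γ] [IsOrderedAddMonoid Γ]
  {v : AddValuation K (WithTop Γ)}

theorem AddValuation.exists_ne_zero_lt_map_pow
    (hv : ∀ γ : Γ, ∃ y : K, y ≠ 0 ∧ (γ : WithTop Γ) < v y)
    {m : ℕ} (hm : m ≠ 0) (γ : Γ) : ∃ t : K, t ≠ 0 ∧ (γ : WithTop Γ) < v (t ^ m) := by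
  obtain ⟨t, ht0, hγt⟩ := hv (max γ 0)
  have hvt : 0 ≤ v t := le_trans (by exact_mod_cast le_max_right γ 0) hγt.le
  refine ⟨t, ht0, ?_⟩
  calc (γ : WithTop Γ) ≤ (max γ 0 : Γ) := by exact_mod_cast le_max_left γ 0
    _ < v t := hγt
    _ ≤ m • v t := le_self_nsmul hvt hm
    _ = v (t ^ m) := (v.map_pow t m).symm

variable {F : Subfield K}

theorem AddValuation.exists_mem_subfield_lt_map_mul
    (hF : ∀ γ : Γ, ∃ s ∈ F, s ≠ 0 ∧ (γ : WithTop Γ) < v s) (z : K) (α : Γ) :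
    ∃ s ∈ F, s ≠ 0 ∧ (α : WithTop Γ) < v s ∧ (α : WithTop Γ) < v (z * s) := by
  rcases eq_or_ne z 0 with rfl | hz
  · obtain ⟨s, hsF, hs0, hs⟩ := hF α
    exact ⟨s, hsF, hs0, hs, by simp⟩
  obtain ⟨g, hg⟩ := WithTop.ne_top_iff_exists.1 (v.ne_top_iff.2 hz)
  obtain ⟨s, hsF, hs0, hs⟩ := hF (max α (α - g))
  refine ⟨s, hsF, hs0, lt_of_le_of_lt (by exact_mod_cast le_max_left _ _) hs, ?_⟩
  rw [v.map_mul, ← hg]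
  calc (α : WithTop Γ) = (g : WithTop Γ) + ((α - g : Γ) : WithTop Γ) := by
        rw [← WithTop.coe_add, add_sub_cancel]
    _ < g + v s := WithTop.add_lt_add_left WithTop.coe_ne_top
        (lt_of_le_of_lt (by exact_mod_cast le_max_right _ _) hs)

theorem AddValuation.exists_mem_subfield_eq_div_sub
    (hF : ∀ γ : Γ, ∃ s ∈ F, s ≠ 0 ∧ (γ : WithTop Γ) < v s)
    {a z : K} (ha : a ∈ F) (hz : z ∈ F) (α : Γ) :
    ∃ x ∈ F, ∃ y ∈ F, (α : WithTop Γ) < v (x - a) ∧ (α : WithTop Γ) < v (y - a) ∧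
      y ≠ a ∧ z = (x - a) / (y - a) := by
  obtain ⟨s, hsF, hs0, hs, hzs⟩ := exists_mem_subfield_lt_map_mul hF z α
  refine ⟨a + z * s, F.add_mem ha (F.mul_mem hz hsF), a + s, F.add_mem ha hsF, ?_, ?_, ?_, ?_⟩
  · rwa [add_sub_cancel_left]
  · rwa [add_sub_cancel_left]
  · simpa using hs0
  · rw [add_sub_cancel_left, add_sub_cancel_left, mul_div_cancel_right₀ z hs0]

end ValuedField

theorem mem_p_pow_field_eq_ratio_from_ball_general
    (p : ℕ) (hp : p.Prime) (K : Type*) [Field K] [CharP K p]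
    (Γ : Type*) [AddCommGroup Γ] [LinearOrder Γ] [IsOrderedAddMonoid Γ]
    (v : AddValuation K (WithTop Γ))
    (hnontriv : ∀ γ : Γ, ∃ y : K, y ≠ 0 ∧ (γ : WithTop Γ) < v y)
    (n : ℕ) (a : K) (ha : a ∈ Set.range fun x : K => x ^ p ^ n) (α : Γ)
    (z : K) (hz : z ∈ Set.range fun x : K => x ^ p ^ n) :
    ∃ x y : K, (α : WithTop Γ) < v (x - a) ∧ (α : WithTop Γ) < v (y - a) ∧
      (x ∈ Set.range fun w : K => w ^ p ^ n) ∧ (y ∈ Set.range fun w : K => w ^ p ^ n) ∧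
      y ≠ a ∧ z = (x - a) / (y - a) := by
  have : Fact p.Prime := ⟨hp⟩
  have hrange : Set.range (fun x : K => x ^ p ^ n) = (iterateFrobenius K p n).fieldRange :=
    (RingHom.coe_fieldRange (iterateFrobenius K p n)).symm
  have hsmall (γ : Γ) :
      ∃ s ∈ (iterateFrobenius K p n).fieldRange, s ≠ 0 ∧ (γ : WithTop Γ) < v s := by
    obtain ⟨t, ht0, ht⟩ := v.exists_ne_zero_lt_map_pow hnontriv (pow_ne_zero n hp.ne_zero) γ
    exact ⟨_, RingHom.mem_fieldRange_self _ t, pow_ne_zero _ ht0, ht⟩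
  rw [hrange] at ha hz
  obtain ⟨x, hx, y, hy, hxa, hya, hyne, hzxy⟩ :=
    v.exists_mem_subfield_eq_div_sub hsmall ha hz α
  exact ⟨x, y, hxa, hya, hrange ▸ hx, hrange ▸ hy, hyne, hzxy⟩

/-- In a nontrivially valued field of characteristic `p > 0` (where Frobenius
scales the valuation: `v(a-b) > α ↔ v(a^p-b^p) > pα`), for any `n`, any `a ∈ K^(p^n)` and
any `α` in the value group, every `z ∈ K^(p^n)` can be written as `(x-a)/(y-a)` with
`x, y ∈ B(α;a) ∩ K^(p^n)` and `y ≠ a`. -/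
theorem mem_p_pow_field_eq_ratio_from_ball
    (p : ℕ) (hp : p.Prime) (K : Type*) [Field K] [CharP K p]
    (Γ : Type*) [AddCommGroup Γ] [LinearOrder Γ] [IsOrderedAddMonoid Γ]
    (v : AddValuation K (WithTop Γ))
    (hnontriv : ∀ γ : Γ, ∃ y : K, y ≠ 0 ∧ (γ : WithTop Γ) < v y)
    (hfrob : ∀ (a b : K) (α : Γ),
      (α : WithTop Γ) < v (a - b) ↔ ((p • α : Γ) : WithTop Γ) < v (a ^ p - b ^ p))
    (n : ℕ) (a : K) (ha : a ∈ Set.range fun x : K => x ^ p ^ n) (α : Γ)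
    (z : K) (hz : z ∈ Set.range fun x : K => x ^ p ^ n) :
    ∃ x y : K, (α : WithTop Γ) < v (x - a) ∧ (α : WithTop Γ) < v (y - a) ∧
      (x ∈ Set.range fun w : K => w ^ p ^ n) ∧ (y ∈ Set.range fun w : K => w ^ p ^ n) ∧
      y ≠ a ∧ z = (x - a) / (y - a) :=
  mem_p_pow_field_eq_ratio_from_ball_general p hp K Γ v hnontriv n a ha α z hz
end

section
/- Let C ⊆ F be fields of characteristic p > 0 and let (a, b) and (c, d) be tuples in F^{1+n}. Then (c, d) lies in the locus of (a, b) over C if and only if (c^p, d) lies in the locus of (a^p, b) over C, where the locus of a tuple u over C is the set of tuples w in F such that every polynomial over C vanishing at u also vanishes at w. -/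
/-- The locus of a tuple `u` over `C`: the set of tuples `w` such that every polynomial
over `C` vanishing at `u` also vanishes at `w`. -/
def fieldLocus (C F : Type*) [Field C] [Field F] [Algebra C F] {m : ℕ}
    (u : Fin m → F) : Set (Fin m → F) :=
  {w | ∀ f : MvPolynomial (Fin m) C,
    MvPolynomial.aeval u f = 0 → MvPolynomial.aeval w f = 0}

open MvPolynomial

lemma locus_pow_aux (C F : Type*) [Field C] [Field F] [Algebra C F] {m : ℕ}
    (p : ℕ) (P : Fin m → Prop) [DecidablePred P] (u w : Fin m → F)
    (h : w ∈ fieldLocus C F u) :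
    (fun i => if P i then w i ^ p else w i) ∈
      fieldLocus C F (fun i => if P i then u i ^ p else u i) := by
  intro f hf
  have key : ∀ v : Fin m → F,
      (aeval (fun i => if P i then v i ^ p else v i) f : F)
        = aeval v (bind₁ (fun i => if P i then (X i : MvPolynomial (Fin m) C) ^ p else X i) f) := by
    intro v
    rw [aeval_bind₁]
    have e : (fun i => if P i then v i ^ p else v i)
        = (fun i => (aeval v) (if P i then (X i : MvPolynomial (Fin m) C) ^ p else X i)) := by
      funext i
      by_cases hi : P i <;> simp [hi]
    rw [e]
  rw [key] at hf ⊢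
  exact h _ hf

lemma locus_frob_aux (p : ℕ) (hp : p.Prime) (C F : Type*) [Field C] [Field F] [CharP F p]
    [Algebra C F] {m : ℕ} (u w : Fin m → F)
    (h : (fun i => w i ^ p) ∈ fieldLocus C F (fun i => u i ^ p)) :
    w ∈ fieldLocus C F u := by
  haveI : Fact p.Prime := ⟨hp⟩
  haveI : CharP C p := (algebraMap C F).charP (algebraMap C F).injective p
  intro f hf
  have key : ∀ v : Fin m → F,
      (aeval (fun i => v i ^ p) (MvPolynomial.map (frobenius C p) f) : F)
        = (aeval v f) ^ p := by
    intro v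
    have : (aeval (fun i => v i ^ p)).toRingHom.comp
        (MvPolynomial.map (frobenius C p) : MvPolynomial (Fin m) C →+* MvPolynomial (Fin m) C)
        = (frobenius F p).comp (aeval v).toRingHom := by
      apply MvPolynomial.ringHom_ext
      · intro c
        simp [frobenius_def, map_pow]
      · intro i
        simp [frobenius_def]
    calc (aeval (fun i => v i ^ p) (MvPolynomial.map (frobenius C p) f) : F)
        = ((aeval (fun i => v i ^ p)).toRingHom.comp
            (MvPolynomial.map (frobenius C p) : MvPolynomial (Fin m) C →+* MvPolynomial (Fin m) C)) f := rfl
      _ = (frobenius F p).comp (aeval v).toRingHom f := by rw [this]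
      _ = (aeval v f) ^ p := rfl
  have h2 : (aeval (fun i => u i ^ p) (MvPolynomial.map (frobenius C p) f) : F) = 0 := by
    rw [key, hf, zero_pow hp.ne_zero]
  have h3 := h _ h2
  rw [key] at h3
  exact pow_eq_zero_iff hp.ne_zero |>.mp h3

/-- In characteristic `p > 0`, `(c, d) ∈ locus((a, b)/C)` iff
`(c^p, d) ∈ locus((a^p, b)/C)`. -/
theorem mem_locus_iff_frobenius_fst_mem_locus
    (p : ℕ) (hp : p.Prime) (C F : Type*) [Field C] [Field F] [CharP F p]
    [Algebra C F] {n : ℕ} (a c : F) (b d : Fin n → F) :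
    Fin.cons c d ∈ fieldLocus C F (Fin.cons a b) ↔
      Fin.cons (c ^ p) d ∈ fieldLocus C F (Fin.cons (a ^ p) b) := by
  constructor
  · intro h
    have h2 := locus_pow_aux C F p (fun i => i = 0) (Fin.cons a b) (Fin.cons c d) h
    have e1 : (fun i : Fin (n+1) => if i = 0 then (Fin.cons a b : Fin (n+1) → F) i ^ p else (Fin.cons a b : Fin (n+1) → F) i)
        = (Fin.cons (a ^ p) b : Fin (n+1) → F) := by
      funext i
      refine Fin.cases ?_ (fun j => ?_) i <;> simp [Fin.succ_ne_zero]
    have e2 : (fun i : Fin (n+1) => if i = 0 then (Fin.cons c d : Fin (n+1) → F) i ^ p else (Fin.cons c d : Fin (n+1) → F) i)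
        = (Fin.cons (c ^ p) d : Fin (n+1) → F) := by
      funext i
      refine Fin.cases ?_ (fun j => ?_) i <;> simp [Fin.succ_ne_zero]
    rwa [e1, e2] at h2
  · intro h
    have h2 := locus_pow_aux C F p (fun i => i ≠ 0) (Fin.cons (a ^ p) b) (Fin.cons (c ^ p) d) h
    have e1 : (fun i : Fin (n+1) => if i ≠ 0 then (Fin.cons (a ^ p) b : Fin (n+1) → F) i ^ p else (Fin.cons (a ^ p) b : Fin (n+1) → F) i)
        = (fun i : Fin (n+1) => (Fin.cons a b : Fin (n+1) → F) i ^ p) := by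
      funext i
      refine Fin.cases ?_ (fun j => ?_) i <;> simp [Fin.succ_ne_zero]
    have e2 : (fun i : Fin (n+1) => if i ≠ 0 then (Fin.cons (c ^ p) d : Fin (n+1) → F) i ^ p else (Fin.cons (c ^ p) d : Fin (n+1) → F) i)
        = (fun i : Fin (n+1) => (Fin.cons c d : Fin (n+1) → F) i ^ p) := by
      funext i
      refine Fin.cases ?_ (fun j => ?_) i <;> simp [Fin.succ_ne_zero]
    rw [e1, e2] at h2
    exact locus_frob_aux p hp C F _ _ h2
end

section
/- Let F/C be a field extension and a, a' ∈ F^n tuples with a' ∈ locus(a/C) and trdeg(C(a)/C) ≤ trdeg(C(a')/C). Then there is a C-algebra isomorphism ρ: C(a) → C(a') with ρ(a_i) = a'_i for each i. -/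
/-!
Membership of `a'` in the locus of `a` says that the kernel of `C[X] → C[a]` is contained in
that of `C[X] → C[a']`; the two kernels are in fact equal. Choose an independent subtuple `a'_t`
at least as large as every independent subtuple of `a`. Then `a_t` is independent as well, hence
of maximal size, so every `a_i` is algebraic over `C[a_t] ≅ C[X_t]`. If `g(a') = 0 ≠ g(a)`, then
`g(a)` is a root of a polynomial `q` over `C[X_t]` with `q(0) ≠ 0`. The element `q(g)` of `C[X]`
vanishes at `a`, hence at `a'`, where it equals `q(0)(a'_t)`; this contradicts the independence
of `a'_t`. Equal kernels give `C[a] ≅ C[a']`, and this extends to the fraction fields.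
-/

open MvPolynomial Set

section

variable {R σ ι A : Type*} [CommRing R] [CommRing A] [Algebra R A]

theorem AlgebraicIndependent.comp_of_ker_aeval_le {a a' : σ → A}
    (hker : RingHom.ker (aeval (R := R) a) ≤ RingHom.ker (aeval a')) (f : ι → σ)
    (h : AlgebraicIndependent R (a' ∘ f)) : AlgebraicIndependent R (a ∘ f) := by
  rw [algebraicIndependent_iff] at h ⊢
  intro p hp
  apply h
  have hp' : rename f p ∈ RingHom.ker (aeval a) := by
    rwa [RingHom.mem_ker, aeval_rename]
  simpa only [RingHom.mem_ker, aeval_rename] using hker hp'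

theorem AlgebraicIndepOn.isAlgebraic_of_forall_card_le [Nontrivial A] {x : ι → A}
    {t : Finset ι} (ht : AlgebraicIndepOn R x t)
    (hmax : ∀ s : Finset ι, AlgebraicIndepOn R x s → s.card ≤ t.card) (i : ι) :
    IsAlgebraic (Algebra.adjoin R (range fun j : (t : Set ι) => x j)) (x i) := by
  classical
  by_cases hi : i ∈ t
  · have hxi : x i ∈ Algebra.adjoin R (range fun j : (t : Set ι) => x j) :=
      Algebra.subset_adjoin ⟨⟨i, hi⟩, rfl⟩
    exact isAlgebraic_algebraMap (⟨x i, hxi⟩ : Algebra.adjoin R _)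
  · by_contra htr
    have hins : AlgebraicIndepOn R x (insert i t : Finset ι) := by
      rw [Finset.coe_insert]
      exact ht.insert (by rwa [image_eq_range])
    have hcard := hmax _ hins
    rw [Finset.card_insert_of_notMem hi] at hcard
    omega

theorem ker_aeval_le_of_isAlgebraic [IsDomain A] {a a' : σ → A}
    (hker : RingHom.ker (aeval (R := R) a) ≤ RingHom.ker (aeval a')) (f : ι → σ)
    (hind : AlgebraicIndependent R (a' ∘ f))
    (halg : ∀ i, IsAlgebraic (Algebra.adjoin R (range (a ∘ f))) (a i)) :
    RingHom.ker (aeval (R := R) a') ≤ RingHom.ker (aeval a) := by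
  intro g hg
  rw [RingHom.mem_ker] at hg ⊢
  by_contra hb
  set S := Algebra.adjoin R (range (a ∘ f))
  have hind_a : AlgebraicIndependent R (a ∘ f) := hind.comp_of_ker_aeval_le hker f
  have hb_alg : IsAlgebraic S (aeval a g) := by
    have hle : Algebra.adjoin R (range a) ≤ (Subalgebra.algebraicClosure S A).restrictScalars R :=
      Algebra.adjoin_le (range_subset_iff.2 halg)
    exact hle (by rw [Algebra.adjoin_range_eq_range_aeval]; exact ⟨g, rfl⟩)
  obtain ⟨q, hq0, hq⟩ := hb_alg.exists_nonzero_coeff_and_aeval_eq_zero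
    (mem_nonZeroDivisors_of_ne_zero hb)
  set φ : S →+* MvPolynomial σ R := (rename f).toRingHom.comp hind_a.repr.toRingHom
  have hφa : (aeval (R := R) a : MvPolynomial σ R →+* A).comp φ = algebraMap S A := by
    ext s
    change aeval a (rename f (hind_a.repr s)) = s
    rw [aeval_rename]
    exact hind_a.aeval_repr s
  have hq_at_a : aeval a (q.eval₂ φ g) = 0 := by
    rw [← AlgHom.coe_toRingHom, Polynomial.hom_eval₂, hφa]
    exact hq
  have hq_at_a' := hker hq_at_a
  rw [RingHom.mem_ker, ← AlgHom.coe_toRingHom, Polynomial.hom_eval₂, AlgHom.coe_toRingHom, hg,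
    Polynomial.eval₂_at_zero] at hq_at_a'
  have hrepr : hind_a.repr (q.coeff 0) = 0 := by
    apply algebraicIndependent_iff_injective_aeval.1 hind
    rw [map_zero, ← aeval_rename]
    exact hq_at_a'
  exact hq0 (hind_a.aevalEquiv.symm.injective (hrepr.trans (map_zero _).symm))

end

theorem ker_aeval_eq_of_forall_card_le {K σ A : Type*} [Field K] [CommRing A] [IsDomain A]
    [Algebra K A] [Finite σ] {a a' : σ → A}
    (hker : RingHom.ker (aeval (R := K) a) ≤ RingHom.ker (aeval a'))
    (htr : ∀ s : Finset σ, AlgebraicIndepOn K a s →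
      ∃ t : Finset σ, s.card ≤ t.card ∧ AlgebraicIndepOn K a' t) :
    RingHom.ker (aeval (R := K) a) = RingHom.ker (aeval a') := by
  classical
  have := Fintype.ofFinite σ
  obtain ⟨s, hs, hs_max⟩ := (Finset.univ.filter fun s : Finset σ => AlgebraicIndepOn K a s)
    |>.exists_max_image Finset.card ⟨∅, Finset.mem_filter.2 ⟨Finset.mem_univ _, by
      rw [AlgebraicIndepOn, Finset.coe_empty]; exact algebraicIndependent_empty_type⟩⟩
  obtain ⟨t, hst, ht'⟩ := htr s (Finset.mem_filter.1 hs).2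
  have ht : AlgebraicIndepOn K a t := ht'.comp_of_ker_aeval_le hker Subtype.val
  have ht_max : ∀ u : Finset σ, AlgebraicIndepOn K a u → u.card ≤ t.card := fun u hu =>
    (hs_max u (Finset.mem_filter.2 ⟨Finset.mem_univ u, hu⟩)).trans hst
  exact le_antisymm hker
    (ker_aeval_le_of_isAlgebraic hker Subtype.val ht' (ht.isAlgebraic_of_forall_card_le ht_max))

theorem Algebra.exists_algEquiv_adjoin_range_of_ker_aeval_eq {R σ A B : Type*} [CommRing R]
    [CommRing A] [CommRing B] [Algebra R A] [Algebra R B] {a : σ → A} {b : σ → B}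
    (h : RingHom.ker (aeval (R := R) a) = RingHom.ker (aeval b)) :
    ∃ e : adjoin R (range a) ≃ₐ[R] adjoin R (range b),
      ∀ i, e ⟨a i, subset_adjoin ⟨i, rfl⟩⟩ = ⟨b i, subset_adjoin ⟨i, rfl⟩⟩ := by
  let ea := (Ideal.quotientKerEquivRange (aeval (R := R) a)).trans
    (Subalgebra.equivOfEq _ _ (adjoin_range_eq_range_aeval R a).symm)
  let eb := (Ideal.quotientKerEquivRange (aeval (R := R) b)).trans
    (Subalgebra.equivOfEq _ _ (adjoin_range_eq_range_aeval R b).symm)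
  refine ⟨ea.symm.trans ((Ideal.quotientEquivAlgOfEq R h).trans eb), fun i => ?_⟩
  have hea : ea (Ideal.Quotient.mk _ (X i)) = ⟨a i, subset_adjoin ⟨i, rfl⟩⟩ :=
    Subtype.ext (aeval_X a i)
  have heb : eb (Ideal.Quotient.mk _ (X i)) = ⟨b i, subset_adjoin ⟨i, rfl⟩⟩ :=
    Subtype.ext (aeval_X b i)
  rw [← hea, ← heb, AlgEquiv.trans_apply, AlgEquiv.symm_apply_apply, AlgEquiv.trans_apply,
    Ideal.quotientEquivAlgOfEq_mk]

open scoped IntermediateField.algebraAdjoinAdjoin in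
theorem IntermediateField.exists_algEquiv_adjoin_range_of_ker_aeval_eq {K σ L M : Type*}
    [Field K] [Field L] [Field M] [Algebra K L] [Algebra K M] {a : σ → L} {b : σ → M}
    (h : RingHom.ker (aeval (R := K) a) = RingHom.ker (aeval b)) :
    ∃ ρ : adjoin K (range a) ≃ₐ[K] adjoin K (range b),
      ∀ i, (ρ ⟨a i, subset_adjoin K _ ⟨i, rfl⟩⟩ : M) = b i := by
  obtain ⟨e, he⟩ := Algebra.exists_algEquiv_adjoin_range_of_ker_aeval_eq h
  refine ⟨IsFractionRing.algEquivOfAlgEquiv e, fun i => ?_⟩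
  have hρ := IsFractionRing.algEquivOfAlgEquiv_algebraMap (K := adjoin K (range a))
    (L := adjoin K (range b)) e ⟨a i, Algebra.subset_adjoin ⟨i, rfl⟩⟩
  rw [he] at hρ
  exact congrArg Subtype.val hρ

/-- If `a' ∈ locus(a/C)` and `trdeg(C(a)/C) ≤ trdeg(C(a')/C)` (expressed as:
every algebraically independent subtuple of `a` is matched in size by one of `a'`), then
there is a `C`-algebra isomorphism `C(a) ≃ C(a')` sending `a_i` to `a'_i`. -/
theorem exists_algEquiv_of_mem_locus
    (C F : Type*) [Field C] [Field F] [Algebra C F] {n : ℕ}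
    (a a' : Fin n → F) (hloc : a' ∈ fieldLocus C F a)
    (htr : ∀ s : Finset (Fin n),
      AlgebraicIndependent C (fun i : {j // j ∈ s} => a i.1) →
      ∃ t : Finset (Fin n), s.card ≤ t.card ∧
        AlgebraicIndependent C (fun i : {j // j ∈ t} => a' i.1)) :
    ∃ ρ : IntermediateField.adjoin C (Set.range a) ≃ₐ[C]
        IntermediateField.adjoin C (Set.range a'),
      ∀ i : Fin n,
        (ρ ⟨a i, IntermediateField.subset_adjoin C (Set.range a) ⟨i, rfl⟩⟩ : F) = a' i :=
  IntermediateField.exists_algEquiv_adjoin_range_of_ker_aeval_eq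
    (ker_aeval_eq_of_forall_card_le hloc htr)
end

section
/- Let F ⪯ F* be an elementary extension of fields in the language of rings, let X ⊆ F be a set defined in F by a formula φ(x;q) with parameters q from F, and let X* be the set defined by the same formula in F*. Let E = (X) and E* = (X*) be the generated subfields. If a tuple a ∈ F^n is algebraically independent over E, then a is algebraically independent over E*. -/
/-!
The field `E = (X)` is algebraic over the ring generated by `X`, so a dependence relation of `a`
over `E` can be taken with coefficients in that ring. Each coefficient is then an integer
polynomial in finitely many elements `y` of `X`, so the relation is captured by a polynomial `Q`
over `ℤ[Y]` that does not mention `y`. For fixed `Q`, "some finite tuple `y` from `X` makes `Q(y)`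
a nonzero polynomial vanishing at `a`" is a first-order property of `a` and the parameters `q`.
Hence a dependence over `E*` witnessed in `F*` transfers down to `F`.
-/

open FirstOrder Language FirstOrder.Ring MvPolynomial FreeCommRing

namespace FreeCommRing

variable {α β R S : Type*} [CommRing R] [CommRing S]

theorem lift_comp_map (f : α → β) (v : β → R) :
    (lift v).comp (FreeCommRing.map f) = lift (v ∘ f) :=
  hom_ext fun _ => by simp

theorem comp_lift (f : R →+* S) (v : α → R) : f.comp (lift v) = lift (f ∘ v) :=
  hom_ext fun _ => by simp

theorem lift_subringClosure_surjective (X : Set R) :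
    Function.Surjective
      (lift fun x : X => (⟨x, Subring.subset_closure x.2⟩ : Subring.closure X)) := by
  intro ⟨z, hz⟩
  have hle : Subring.closure X ≤ (lift ((↑) : X → R)).range :=
    Subring.closure_le.2 fun x hx => ⟨of ⟨x, hx⟩, lift_of _ _⟩
  obtain ⟨p, hp⟩ := hle hz
  refine ⟨p, Subtype.ext ?_⟩
  change ((Subring.closure X).subtype.comp (lift _)) p = z
  rw [comp_lift]
  exact hp

end FreeCommRing

namespace MvPolynomial

theorem map_ne_zero_iff_exists_coeff {σ R S : Type*} [CommSemiring R] [CommSemiring S]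
    (f : R →+* S) (p : MvPolynomial σ R) :
    p.map f ≠ 0 ↔ ∃ m : p.support, f (p.coeff m) ≠ 0 := by
  rw [ne_zero_iff]
  simp only [coeff_map, Subtype.exists, mem_support_iff]
  exact ⟨fun ⟨m, hm⟩ => ⟨m, fun h => hm (by rw [h, map_zero]), hm⟩, fun ⟨m, _, hm⟩ => ⟨m, hm⟩⟩

theorem exists_finset_map_freeCommRingMap_eq {ι α : Type*}
    (Q : MvPolynomial ι (FreeCommRing α)) :
    ∃ (T : Finset α) (Q' : MvPolynomial ι (FreeCommRing T)),
      Q'.map (FreeCommRing.map (↑)) = Q := by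
  classical
  choose t ht using fun m => exists_finset_support (Q.coeff m)
  let T := Q.support.biUnion t
  refine ⟨T, Q.map (restriction (T : Set α)), ?_⟩
  ext m
  rw [coeff_map, coeff_map, ← RingHom.comp_apply]
  by_cases hm : m ∈ Q.support
  · exact map_subtype_val_restriction _ (isSupported_upwards (ht m) (by
      exact_mod_cast Finset.subset_biUnion_of_mem t hm))
  · rw [notMem_support_iff.1 hm, map_zero]

theorem lift_sumElim_eval₂ {ι β R : Type*} [CommRing R] (Q : MvPolynomial ι (FreeCommRing β))
    (a : ι → R) (y : β → R) :
    lift (Sum.elim a y) (Q.eval₂ (FreeCommRing.map Sum.inr) (of ∘ Sum.inl)) =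
      (Q.map (lift y)).eval a := by
  rw [eval₂_comp_left, lift_comp_map, eval_map]
  simp [Function.comp_def]

end MvPolynomial

theorem algebraicIndependent_subfield_iff_subring {K ι : Type*} [Field K] {R : Subring K}
    {E : Subfield K} (hRE : R ≤ E.toSubring) (hER : E ≤ Subfield.closure R) {a : ι → K} :
    AlgebraicIndependent E a ↔ AlgebraicIndependent R a := by
  let _ : Algebra R E := (Subring.inclusion hRE).toAlgebra
  have : IsScalarTower R E K := .of_algebraMap_eq fun _ => rfl
  have : FaithfulSMul R E :=
    (faithfulSMul_iff_algebraMap_injective _ _).2 (Subring.inclusion_injective _)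
  have : Algebra.IsAlgebraic R E := ⟨fun z => by
    rw [← isAlgebraic_algHom_iff (IsScalarTower.toAlgHom R E K) Subtype.val_injective]
    obtain ⟨u, hu, v, hv, huv⟩ := Subfield.mem_closure_iff.1 (hER z.2)
    rw [Subring.closure_eq] at hu hv
    have := (isAlgebraic_algebraMap (A := K) (⟨v, hv⟩ : R)).inv.smul (⟨u, hu⟩ : R)
    rw [Subring.smul_def, smul_eq_mul, ← div_eq_mul_inv] at this
    change IsAlgebraic R (z : K)
    rwa [← huv]⟩
  exact (Algebra.IsAlgebraic.algebraicIndependent_iff _ _).symm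

theorem algebraicIndependent_subfieldClosure_iff {K ι : Type*} [Field K] (X : Set K)
    {a : ι → K} :
    AlgebraicIndependent (Subfield.closure X) a ↔ AlgebraicIndependent (Subring.closure X) a :=
  algebraicIndependent_subfield_iff_subring (Subfield.subring_closure_le X)
    (Subfield.closure_mono Subring.subset_closure)

theorem not_algebraicIndependent_subringClosure {K ι β : Type*} [CommRing K] {X : Set K}
    {a : ι → K} {y : β → K} (hy : ∀ j, y j ∈ X) {Q : MvPolynomial ι (FreeCommRing β)}
    (hQ : Q.map (lift y) ≠ 0) (hQa : (Q.map (lift y)).eval a = 0) :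
    ¬ AlgebraicIndependent (Subring.closure X) a := by
  let yX : β → Subring.closure X := fun j => ⟨y j, Subring.subset_closure (hy j)⟩
  have hmap : (Q.map (lift yX)).map (Subring.closure X).subtype = Q.map (lift y) := by
    rw [MvPolynomial.map_map, comp_lift]
    rfl
  rw [algebraicIndependent_iff]
  push Not
  refine ⟨Q.map (lift yX), ?_, fun h => hQ (by rw [← hmap, h, map_zero])⟩
  rw [aeval_def, eval₂_eq_eval_map]
  exact hmap ▸ hQa

theorem exists_finset_of_not_algebraicIndependent_subringClosure {K ι : Type*} [CommRing K]
    {X : Set K} {a : ι → K} (h : ¬ AlgebraicIndependent (Subring.closure X) a) :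
    ∃ (T : Finset X) (Q : MvPolynomial ι (FreeCommRing T)),
      Q.map (lift fun t : T => ((t : X) : K)) ≠ 0 ∧
        (Q.map (lift fun t : T => ((t : X) : K))).eval a = 0 := by
  rw [algebraicIndependent_iff] at h
  push Not at h
  obtain ⟨P, hPa, hP⟩ := h
  let π : FreeCommRing X →+* Subring.closure X := lift fun x => ⟨x, Subring.subset_closure x.2⟩
  obtain ⟨Q₀, rfl⟩ := map_surjective π (lift_subringClosure_surjective X) P
  obtain ⟨T, Q, rfl⟩ := exists_finset_map_freeCommRingMap_eq Q₀
  have hmap : Q.map (lift fun t : T => ((t : X) : K)) =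
      ((Q.map (FreeCommRing.map Subtype.val)).map π).map (Subring.closure X).subtype := by
    rw [MvPolynomial.map_map, MvPolynomial.map_map, comp_lift, lift_comp_map]
    rfl
  refine ⟨T, Q, ?_, ?_⟩
  · rw [hmap]
    exact fun h0 => hP (map_injective _ Subtype.val_injective (by rw [h0, map_zero]))
  · rw [hmap, ← eval₂_eq_eval_map, ← hPa]
    rfl

theorem FirstOrder.Language.Formula.realize_comp_iff_of_forall_fin {L : Language} {M N : Type*}
    [L.Structure M] [L.Structure N] {g : M → N}
    (hg : ∀ (m : ℕ) (ψ : L.Formula (Fin m)) (x : Fin m → M), ψ.Realize (g ∘ x) ↔ ψ.Realize x)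
    {α : Type*} [Finite α] (ψ : L.Formula α) (x : α → M) :
    ψ.Realize (g ∘ x) ↔ ψ.Realize x := by
  obtain ⟨m, ⟨e⟩⟩ := Finite.exists_equiv_fin α
  simpa [Formula.realize_relabel, Function.comp_assoc] using hg m (ψ.relabel e) (x ∘ e.symm)

section DependenceFormula

variable {ι γ β : Type*} [Finite β]

/-- In the free variables `a : ι` and parameters `q : γ`, the formula
`∃ y : β, (∀ j, φ(q, y j)) ∧ Q(y) ≠ 0 ∧ Q(y)(a) = 0`, where `Q(y)` specialises the
coefficients of `Q`. -/
noncomputable def dependenceFormula (φ : Language.ring.Formula (γ ⊕ Fin 1))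
    (Q : MvPolynomial ι (FreeCommRing β)) : Language.ring.Formula (ι ⊕ γ) :=
  Formula.iExs β <|
    Formula.iInf (fun j : β => φ.relabel (Sum.elim (Sum.inl ∘ Sum.inr) fun _ => Sum.inr j)) ⊓
    Formula.iSup (fun m : Q.support =>
      (Term.equal ((termOfFreeCommRing (Q.coeff m)).relabel Sum.inr) 0).not) ⊓
    Term.equal ((termOfFreeCommRing (Q.eval₂ (FreeCommRing.map Sum.inr) (of ∘ Sum.inl))).relabel
      (Sum.map Sum.inl id)) 0

theorem realize_dependenceFormula {K : Type*} [CommRing K] [CompatibleRing K]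
    (φ : Language.ring.Formula (γ ⊕ Fin 1)) (Q : MvPolynomial ι (FreeCommRing β))
    (a : ι → K) (q : γ → K) :
    (dependenceFormula φ Q).Realize (Sum.elim a q) ↔ ∃ y : β → K,
      (∀ j, φ.Realize (Sum.elim q fun _ => y j)) ∧ Q.map (lift y) ≠ 0 ∧
        (Q.map (lift y)).eval a = 0 := by
  rw [dependenceFormula, Formula.realize_iExs]
  refine exists_congr fun y => ?_
  simp only [Formula.realize_inf, Formula.realize_iInf, Formula.realize_iSup, Formula.realize_not,
    Formula.realize_relabel, Formula.realize_equal, Term.realize_relabel,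
    realize_termOfFreeCommRing, realize_zero, map_ne_zero_iff_exists_coeff, Sum.comp_elim,
    Sum.elim_comp_map, ← Function.comp_assoc, Sum.elim_comp_inl, Sum.elim_comp_inr,
    Function.comp_id, lift_sumElim_eval₂, and_assoc]
  rfl

end DependenceFormula

/-- Let `g : F → F*` be an elementary embedding of fields (language of
rings), `X ⊆ F` defined by a formula `φ(x; q)` with parameters `q` from `F`, and `X*` the
set defined by the same formula in `F*`. If a tuple `a` is algebraically independent over
the subfield generated by `X`, then `g ∘ a` is algebraically independent over the subfield
generated by `X*`. -/
theorem algebraicIndependent_over_generated_subfield_elementary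
    (F F' : Type*) [Field F] [Field F'] [CompatibleRing F] [CompatibleRing F']
    (g : F →+* F')
    (helem : ∀ (m : ℕ) (ψ : Language.ring.Formula (Fin m)) (x : Fin m → F),
      ψ.Realize (g ∘ x) ↔ ψ.Realize x)
    (k : ℕ) (φ : Language.ring.Formula (Fin k ⊕ Fin 1)) (q : Fin k → F)
    (X : Set F) (hX : X = {x : F | φ.Realize (Sum.elim q fun _ => x)})
    (X' : Set F') (hX' : X' = {x : F' | φ.Realize (Sum.elim (g ∘ q) fun _ => x)})
    {n : ℕ} (a : Fin n → F)
    (ha : AlgebraicIndependent (Subfield.closure X) a) :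
    AlgebraicIndependent (Subfield.closure X') (g ∘ a) := by
  subst hX hX'
  rw [algebraicIndependent_subfieldClosure_iff] at ha ⊢
  by_contra hdep
  obtain ⟨T, Q, hQ, hQa⟩ := exists_finset_of_not_algebraicIndependent_subringClosure hdep
  have hF' : (dependenceFormula φ Q).Realize (g ∘ Sum.elim a q) := by
    rw [Sum.comp_elim, realize_dependenceFormula]
    exact ⟨_, fun t => t.1.2, hQ, hQa⟩
  obtain ⟨y, hyX, hQy, hQya⟩ := (realize_dependenceFormula φ Q a q).1
    ((Formula.realize_comp_iff_of_forall_fin helem _ _).1 hF')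
  exact not_algebraicIndependent_subringClosure hyX hQy hQya ha
end
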